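/- arXiv:1109.5006 — 8 statements merged into one kernel-verified Lean document; each statement's English description precedes it below -/
import Mathlib

section
/- Let T be an n×n real matrix with Tv = 0 for some nonzero vector v, and let r be a vector with rᵀv = 1. Then for any scalar η, the characteristic polynomial of T̂ = T + η v rᵀ equals the characteristic polynomial of T with one factor of λ replaced by (λ - η); equivalently, the multiset of eigenvalues of T̂ consists of those of T except that one zero eigenvalue of T is replaced by η. -/
/-!
For `B = η • vecMulVec v r`, `T v = 0` gives `T * B = 0`, hence
`(X - T) (X - B) = X (X - (T + B))`. Taking determinants, `X ^ n χ(T + B) = χ(T) χ(B)`, and the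
rank-one matrix `B` has `χ(B) = X ^ (n - 1) (X - η)` since its trace is `η (r ⬝ᵥ v) = η`.
-/

open Matrix Polynomial

namespace Matrix

variable {R n : Type*} [CommRing R] [Fintype n] [DecidableEq n]

theorem charmatrix_mul_charmatrix_of_mul_eq_zero {A B : Matrix n n R} (h : A * B = 0) :
    charmatrix A * charmatrix B = (X : R[X]) • charmatrix (A + B) := by
  have hAB : (C : R →+* R[X]).mapMatrix A * (C : R →+* R[X]).mapMatrix B = 0 := by
    rw [← map_mul, h, map_zero]
  simp only [charmatrix, sub_mul, mul_sub, hAB, map_add, smul_sub, smul_add, scalar_apply,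
    ← smul_eq_diagonal_mul, ← smul_eq_mul_diagonal]
  abel

theorem charpoly_add_of_mul_eq_zero {A B : Matrix n n R} (h : A * B = 0) :
    X ^ Fintype.card n * (A + B).charpoly = A.charpoly * B.charpoly := by
  rw [charpoly, charpoly, charpoly, ← det_mul, charmatrix_mul_charmatrix_of_mul_eq_zero h,
    det_smul]

theorem charpoly_vecMulVec_mul_X (u w : n → R) :
    (vecMulVec u w).charpoly * X = X ^ Fintype.card n * (X - C (u ⬝ᵥ w)) := by
  cases isEmpty_or_nonempty n
  · simp
  · rw [charpoly_vecMulVec, smul_eq_C_mul, ← Nat.sub_add_cancel Fintype.card_pos,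
      Nat.add_sub_cancel]
    ring

end Matrix

theorem shifted_charpoly_general {n : ℕ} (T : Matrix (Fin n) (Fin n) ℝ) (v r : Fin n → ℝ)
    (hTv : T.mulVec v = 0) (hrv : r ⬝ᵥ v = 1) (η : ℝ) :
    (T + η • vecMulVec v r).charpoly * X = T.charpoly * (X - C η) := by
  have hTB : T * (η • vecMulVec v r) = 0 := by
    rw [Matrix.mul_smul, mul_vecMulVec, hTv, zero_vecMulVec, smul_zero]
  have htrace : (η • v) ⬝ᵥ r = η := by
    rw [smul_dotProduct, dotProduct_comm, hrv, smul_eq_mul, mul_one]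
  apply (isRegular_X_pow (Fintype.card (Fin n))).left
  calc X ^ Fintype.card (Fin n) * ((T + η • vecMulVec v r).charpoly * X)
      = T.charpoly * ((vecMulVec (η • v) r).charpoly * X) := by
        rw [← mul_assoc, charpoly_add_of_mul_eq_zero hTB, smul_vecMulVec, mul_assoc]
    _ = X ^ Fintype.card (Fin n) * (T.charpoly * (X - C η)) := by
        rw [charpoly_vecMulVec_mul_X, htrace]; ring

/-- Lemma 3.1 (shift lemma): if `T v = 0` with `v ≠ 0` and `rᵀ v = 1`, then the
characteristic polynomial of `T + η v rᵀ` is that of `T` with one factor `λ`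
replaced by `λ - η`. -/
theorem shifted_charpoly {n : ℕ} (T : Matrix (Fin n) (Fin n) ℝ) (v r : Fin n → ℝ)
    (hv : v ≠ 0) (hTv : T.mulVec v = 0) (hrv : r ⬝ᵥ v = 1) (η : ℝ) :
    (T + η • vecMulVec v r).charpoly * X = T.charpoly * (X - C η) :=
  shifted_charpoly_general T v r hTv hrv η
end

section
/- Let 0 < ω_n < ⋯ < ω_1 < 1 and c_i > 0 with Σ c_i = 1, and let q_i = c_i/(2ω_i), δ_i = d_i = 1/ω_i (the critical case α=0, c=1). Define Γ = Δ = diag(1/ω_1,…,1/ω_n), and M = [[Γ - q eᵀ, -q qᵀ],[-e eᵀ, Δ - e qᵀ]]. Then the characteristic polynomial of M factors as det(M - λI) = -λ · ∏_{i=1}^n (1/ω_i - λ) · g(λ), where g(λ) = Σ_{j=1}^n c_j ∏_{k≠j} (1/ω_k - λ). -/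
/-!
With `d i = 1 / ω i`, the matrix `M` is `diag(d, d)` minus the rank-one matrix `(q, e) (e, q)ᵀ`.
Away from the finitely many values `λ = d i`, the matrix determinant lemma gives
`det (M - λ) = ∏ (d i - λ)² · (1 - 2 ∑ q i / (d i - λ))`, and since `2 q i = c i d i` and
`∑ c i = 1`, the secular factor `1 - ∑ c i d i / (d i - λ)` equals `-λ ∑ c i / (d i - λ)`.
Both sides are continuous in `λ`, so the identity extends to all `λ`.
-/

open Matrix Finset

theorem Matrix.det_diagonal_sub_vecMulVec {K ι : Type*} [Field K] [Fintype ι] [DecidableEq ι]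
    (a v w : ι → K) (ha : ∀ i, a i ≠ 0) :
    (diagonal a - vecMulVec v w).det = (∏ i, a i) * (1 - ∑ i, v i * w i / a i) := by
  have hfactor : diagonal a - vecMulVec v w =
      diagonal a * (1 + replicateCol Unit (fun i => -(v i / a i)) * replicateRow Unit w) := by
    rw [← vecMulVec_eq Unit, Matrix.mul_add, Matrix.mul_one, mul_vecMulVec, sub_eq_add_neg,
      ← neg_vecMulVec]
    congr 2 with i
    simp [mulVec_diagonal, mul_div_cancel₀ _ (ha i)]
  rw [hfactor, det_mul, det_one_add_replicateCol_mul_replicateRow, det_diagonal, dotProduct,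
    sub_eq_add_neg, ← sum_neg_distrib]
  congr 2
  exact sum_congr rfl fun i _ => by ring

theorem Matrix.diagonal_sum_elim_sub_vecMulVec {R l m : Type*} [Ring R] [DecidableEq l]
    [DecidableEq m] (a : l → R) (b : m → R) (u₁ v₁ : l → R) (u₂ v₂ : m → R) :
    diagonal (Sum.elim a b) - vecMulVec (Sum.elim u₁ u₂) (Sum.elim v₁ v₂) =
      fromBlocks (diagonal a - vecMulVec u₁ v₁) (-vecMulVec u₁ v₂)
        (-vecMulVec u₂ v₁) (diagonal b - vecMulVec u₂ v₂) := by
  ext (i | i) (j | j) <;> simp [vecMulVec_apply, diagonal_apply]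

theorem Continuous.ext_on_compl_finite {X Y : Type*} [TopologicalSpace X] [T1Space X]
    [∀ x : X, Filter.NeBot (nhdsWithin x {x}ᶜ)] [TopologicalSpace Y] [T2Space Y] {f g : X → Y}
    (hf : Continuous f) (hg : Continuous g) {s : Set X} (hs : s.Finite)
    (h : ∀ x ∉ s, f x = g x) : f = g :=
  hf.ext_on (s := sᶜ) (by simpa [Set.compl_eq_univ_sdiff] using dense_univ.sdiff_finite hs) hg h

theorem sum_mul_prod_erase_eq_prod_mul_sum_div {K ι : Type*} [Field K] [Fintype ι]
    [DecidableEq ι] (a c : ι → K) (ha : ∀ i, a i ≠ 0) :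
    ∑ j, c j * ∏ k ∈ univ.erase j, a k = (∏ i, a i) * ∑ j, c j / a j := by
  rw [mul_sum]
  refine sum_congr rfl fun j _ => ?_
  rw [← mul_prod_erase univ a (mem_univ j)]
  field_simp [ha j]

section Secular

variable {K ι : Type*} [Field K] [DecidableEq ι]

def secularMatrix (d c : ι → K) : Matrix (ι ⊕ ι) (ι ⊕ ι) K :=
  diagonal (Sum.elim d d) -
    vecMulVec (Sum.elim (fun i => c i * d i / 2) 1) (Sum.elim 1 fun i => c i * d i / 2)

theorem secularMatrix_sub_smul_one (d c : ι → K) (t : K) :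
    secularMatrix d c - t • 1 =
      diagonal (Sum.elim (fun i => d i - t) (fun i => d i - t)) -
        vecMulVec (Sum.elim (fun i => c i * d i / 2) 1) (Sum.elim 1 fun i => c i * d i / 2) := by
  rw [secularMatrix, sub_right_comm, smul_one_eq_diagonal, diagonal_sub]
  congr with (i | i) <;> rfl

theorem det_secularMatrix_sub_smul_one_of_ne [Fintype ι] [NeZero (2 : K)] (d c : ι → K)
    (hsum : ∑ i, c i = 1) (t : K) (ht : ∀ i, d i - t ≠ 0) :
    (secularMatrix d c - t • 1).det =
      -t * (∏ i, (d i - t)) * ∑ j, c j * ∏ k ∈ univ.erase j, (d k - t) := by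
  have ha : ∀ x, Sum.elim (fun i => d i - t) (fun i => d i - t) x ≠ 0 := by
    rintro (i | i) <;> exact ht i
  have hdouble : ∑ i, c i * d i / 2 * 1 / (d i - t) + ∑ i, 1 * (c i * d i / 2) / (d i - t) =
      ∑ i, c i * d i / (d i - t) := by
    rw [← sum_add_distrib]
    exact sum_congr rfl fun i _ => by field_simp; ring
  have hsecular : 1 - ∑ i, c i * d i / (d i - t) = -t * ∑ i, c i / (d i - t) := by
    rw [← hsum, ← sum_sub_distrib, mul_sum]
    refine sum_congr rfl fun i _ => ?_
    field_simp [ht i]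
    ring
  rw [secularMatrix_sub_smul_one, det_diagonal_sub_vecMulVec _ _ _ ha, Fintype.prod_sum_type,
    Fintype.sum_sum_type, sum_mul_prod_erase_eq_prod_mul_sum_div _ _ ht]
  simp only [Sum.elim_inl, Sum.elim_inr, Pi.one_apply]
  rw [hdouble, hsecular]
  ring

end Secular

theorem det_secularMatrix_sub_smul_one {ι : Type*} [Fintype ι] [DecidableEq ι] (d c : ι → ℝ)
    (hsum : ∑ i, c i = 1) (t : ℝ) :
    (secularMatrix d c - t • 1).det =
      -t * (∏ i, (d i - t)) * ∑ j, c j * ∏ k ∈ univ.erase j, (d k - t) := by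
  refine congrFun (Continuous.ext_on_compl_finite
    (f := fun s => (secularMatrix d c - s • 1).det)
    (g := fun s => -s * (∏ i, (d i - s)) * ∑ j, c j * ∏ k ∈ univ.erase j, (d k - s))
    (by fun_prop) (by fun_prop)
    (Set.finite_range d) fun s hs => ?_) t
  exact det_secularMatrix_sub_smul_one_of_ne d c hsum s fun i => sub_ne_zero.2 fun h => hs ⟨i, h⟩

theorem charpoly_factorization_critical_general {n : ℕ} (ω c : Fin n → ℝ)
    (hsum : ∑ i, c i = 1)
    (q e : Fin n → ℝ) (hq : q = fun i => c i / (2 * ω i)) (he : e = fun _ => 1)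
    (Γ : Matrix (Fin n) (Fin n) ℝ) (hΓ : Γ = diagonal fun i => 1 / ω i)
    (M : Matrix (Fin n ⊕ Fin n) (Fin n ⊕ Fin n) ℝ)
    (hM : M = fromBlocks (Γ - vecMulVec q e) (-(vecMulVec q q))
      (-(vecMulVec e e)) (Γ - vecMulVec e q))
    (lam : ℝ) :
    (M - lam • 1).det =
      -lam * (∏ i, (1 / ω i - lam)) *
        (∑ j, c j * ∏ k ∈ univ.erase j, (1 / ω k - lam)) := by
  have hq' : q = fun i => c i * (1 / ω i) / 2 := by
    rw [hq]
    ext i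
    ring
  have hM' : M = secularMatrix (fun i => 1 / ω i) c := by
    rw [hM, hΓ, secularMatrix, diagonal_sum_elim_sub_vecMulVec, ← hq', he]
    rfl
  rw [hM', det_secularMatrix_sub_smul_one _ _ hsum]

/-- Secular-equation factorization of the characteristic polynomial of `M` in the
critical case `(α, c) = (0, 1)`. -/
theorem charpoly_factorization_critical {n : ℕ} (ω c : Fin n → ℝ)
    (hω : ∀ i, 0 < ω i) (hω1 : ∀ i, ω i < 1) (hmono : StrictAnti ω)
    (hc : ∀ i, 0 < c i) (hsum : ∑ i, c i = 1)
    (q e : Fin n → ℝ) (hq : q = fun i => c i / (2 * ω i)) (he : e = fun _ => 1)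
    (Γ : Matrix (Fin n) (Fin n) ℝ) (hΓ : Γ = diagonal fun i => 1 / ω i)
    (M : Matrix (Fin n ⊕ Fin n) (Fin n ⊕ Fin n) ℝ)
    (hM : M = fromBlocks (Γ - vecMulVec q e) (-(vecMulVec q q))
      (-(vecMulVec e e)) (Γ - vecMulVec e q))
    (lam : ℝ) :
    (M - lam • 1).det =
      -lam * (∏ i, (1 / ω i - lam)) *
        (∑ j, c j * ∏ k ∈ univ.erase j, (1 / ω k - lam)) :=
  charpoly_factorization_critical_general ω c hsum q e hq he Γ hΓ M hM lam
end

section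
/- In the critical case, the 2n×2n matrix M = [[Γ - q eᵀ, -q qᵀ],[-e eᵀ, Δ - e qᵀ]] has 2n real eigenvalues: 0, 1/ω_1, …, 1/ω_n, and μ_1, …, μ_{n-1} satisfying the interlacing 0 < 1/ω_1 < μ_1 < 1/ω_2 < μ_2 < ⋯ < μ_{n-1} < 1/ω_n. -/
/-!
With `d i = 1 / ω i`, the matrix `λ • 1 - M` is `diagonal (λ - d, λ - d)` plus the rank-one
matrix `(q, e) (e, q)ᵀ`. The matrix determinant lemma, valid for `λ` off the `d i` and then
everywhere by continuity, gives `det (λ • 1 - M) = ∏ (λ - d i) * g λ` with the secular polynomial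
`g λ = ∏ (λ - d i) * (1 + ∑ 2 q i / (λ - d i))`, monic of degree `n`. As `2 q i = c i d i` and
`∑ c i = 1`, `g 0 = 0`; and `g (d k) = 2 q k ∏_{j ≠ k} (d k - d j)` alternates in sign, so `g` has
a root `μ k` strictly between consecutive `d k`. These are `n` distinct roots of `g`, hence
`g = X ∏ (X - μ k)`.
-/

open Matrix Finset Polynomial

theorem Matrix.det_diagonal_add_vecMulVec {K ι : Type*} [Field K] [Fintype ι] [DecidableEq ι]
    {D : ι → K} (hD : ∀ i, D i ≠ 0) (u v : ι → K) :
    (diagonal D + vecMulVec u v).det = (∏ i, D i) * (1 + ∑ i, u i * v i / D i) := by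
  have hunit : IsUnit (diagonal D).det := by
    rw [det_diagonal]; exact (prod_ne_zero_iff.mpr fun i _ => hD i).isUnit
  have hinv : ∀ i, Ring.inverse D i = (D i)⁻¹ := fun i =>
    eq_inv_of_mul_eq_one_left
      (congrFun (Ring.inverse_mul_cancel D (Pi.isUnit_iff.mpr fun i => (hD i).isUnit)) i)
  rw [vecMulVec_eq Unit, det_add_replicateCol_mul_replicateRow hunit, det_diagonal,
    inv_diagonal, det_unique]
  simp only [Matrix.add_apply, Matrix.one_apply_eq, Matrix.mul_apply, diagonal_apply,
    mul_ite, mul_zero, sum_ite_eq', mem_univ, ↓reduceIte, replicateRow_apply,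
    replicateCol_apply, hinv]
  congr 2
  exact sum_congr rfl fun i _ => by ring

theorem Polynomial.Monic.eq_prod_X_sub_C_of_natDegree_le_card {R : Type*} [CommRing R]
    [IsDomain R] {p : R[X]} (hp : p.Monic) {s : Finset R} (hs : p.natDegree ≤ #s)
    (hroots : ∀ x ∈ s, p.IsRoot x) : p = ∏ x ∈ s, (X - C x) := by
  have hle : s.val ≤ p.roots :=
    (Multiset.le_iff_subset s.nodup).mpr fun x hx => (mem_roots hp.ne_zero).mpr (hroots x hx)
  have hroots_eq : p.roots = s.val :=
    (Multiset.eq_of_le_of_card_le hle ((card_roots' p).trans hs)).symm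
  rw [prod_eq_multiset_prod, ← hroots_eq, prod_multiset_X_sub_C_of_monic_of_roots_card_eq hp]
  exact le_antisymm (card_roots' p) (hroots_eq ▸ hs)

namespace Polynomial

section CommRing

variable {R ι : Type*} [CommRing R] [Fintype ι] [DecidableEq ι]

noncomputable def secularPoly (d w : ι → R) : R[X] :=
  ∏ i, (X - C (d i)) + ∑ i, C (w i) * ∏ j ∈ univ.erase i, (X - C (d j))

variable (d w : ι → R)

theorem eval_secularPoly (x : R) : (secularPoly d w).eval x =
    ∏ i, (x - d i) + ∑ i, w i * ∏ j ∈ univ.erase i, (x - d j) := by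
  simp [secularPoly, eval_prod, eval_finsetSum]

theorem degree_sum_erase_lt_degree_prod_X_sub_C [Nontrivial R] :
    (∑ i, C (w i) * ∏ j ∈ univ.erase i, (X - C (d j))).degree <
      (∏ i, (X - C (d i))).degree := by
  rw [degree_eq_natDegree (monic_prod_of_monic _ _ fun i _ => monic_X_sub_C (d i)).ne_zero,
    natDegree_finsetProd_X_sub_C_eq_card]
  refine (degree_sum_le _ _).trans_lt
    ((Finset.sup_lt_iff (WithBot.bot_lt_coe _)).mpr fun i _ => ?_)
  calc (C (w i) * ∏ j ∈ univ.erase i, (X - C (d j))).degree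
      ≤ (∏ j ∈ univ.erase i, (X - C (d j))).natDegree :=
        smul_eq_C_mul (w i) ▸ (degree_smul_le _ _).trans degree_le_natDegree
    _ < #univ := by
        rw [natDegree_finsetProd_X_sub_C_eq_card, card_erase_of_mem (mem_univ i)]
        exact_mod_cast Nat.sub_lt (card_pos.mpr ⟨i, mem_univ i⟩) one_pos

theorem monic_secularPoly [Nontrivial R] : (secularPoly d w).Monic :=
  (monic_prod_of_monic _ _ fun i _ => monic_X_sub_C (d i)).add_of_left
    (degree_sum_erase_lt_degree_prod_X_sub_C d w)

theorem natDegree_secularPoly [Nontrivial R] :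
    (secularPoly d w).natDegree = Fintype.card ι := by
  rw [secularPoly,
    natDegree_add_eq_left_of_degree_lt (degree_sum_erase_lt_degree_prod_X_sub_C d w),
    natDegree_finsetProd_X_sub_C_eq_card, card_univ]

theorem eval_secularPoly_self (k : ι) :
    (secularPoly d w).eval (d k) = w k * ∏ j ∈ univ.erase k, (d k - d j) := by
  rw [eval_secularPoly, prod_eq_zero (mem_univ k) (sub_self _), zero_add]
  refine sum_eq_single k (fun i _ hik => ?_) (absurd (mem_univ k))
  rw [prod_eq_zero (mem_erase.mpr ⟨Ne.symm hik, mem_univ k⟩) (sub_self _), mul_zero]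

theorem eval_zero_secularPoly_mul (c : ι → R) :
    (secularPoly d fun i => c i * d i).eval 0 = (1 - ∑ i, c i) * ∏ i, -d i := by
  have hterm (i : ι) : c i * d i * ∏ j ∈ univ.erase i, (0 - d j) = -(c i * ∏ j, -d j) := by
    rw [← mul_prod_erase univ (fun j => -d j) (mem_univ i)]
    simp only [zero_sub]
    ring
  rw [eval_secularPoly, sum_congr rfl fun i _ => hterm i, sum_neg_distrib, ← sum_mul]
  simp only [zero_sub]
  ring

end CommRing

theorem eval_secularPoly_of_ne {K ι : Type*} [Field K] [Fintype ι] [DecidableEq ι]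
    (d w : ι → K) {x : K} (hx : ∀ i, x ≠ d i) :
    (secularPoly d w).eval x = (∏ i, (x - d i)) * (1 + ∑ i, w i / (x - d i)) := by
  rw [eval_secularPoly, mul_add, mul_one, mul_sum]
  congr 1
  refine sum_congr rfl fun i _ => ?_
  rw [← mul_prod_erase univ (fun j => x - d j) (mem_univ i)]
  field_simp [sub_ne_zero.mpr (hx i)]

end Polynomial

theorem prod_erase_sub_mul_prod_erase_sub_neg {K ι : Type*} [Field K] [LinearOrder K]
    [IsStrictOrderedRing K] [Fintype ι] [DecidableEq ι] {d : ι → K} {a b : ι} (hab : d a < d b)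
    (hgap : ∀ j, j ≠ a → j ≠ b → d j < d a ∨ d b < d j) :
    (∏ j ∈ univ.erase a, (d a - d j)) * ∏ j ∈ univ.erase b, (d b - d j) < 0 := by
  have hne : a ≠ b := fun h => hab.ne (congrArg d h)
  set s := (univ.erase a).erase b
  have hpos : 0 < ∏ j ∈ s, (d a - d j) * (d b - d j) := by
    refine prod_pos fun j hj => ?_
    obtain ⟨hjb, hja⟩ : j ≠ b ∧ j ≠ a := by simpa [s] using hj
    rcases hgap j hja hjb with h | h
    · exact mul_pos (by linarith) (by linarith)
    · exact mul_pos_of_neg_of_neg (by linarith) (by linarith)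
  rw [← mul_prod_erase _ _ (mem_erase.mpr ⟨hne.symm, mem_univ b⟩),
    ← mul_prod_erase _ _ (mem_erase.mpr ⟨hne, mem_univ a⟩), erase_right_comm (a := b)]
  have hsq : 0 < (d b - d a) ^ 2 := by nlinarith
  rw [prod_mul_distrib] at hpos
  nlinarith

namespace Polynomial

theorem exists_isRoot_secularPoly_mem_Ioo {ι : Type*} [Fintype ι] [DecidableEq ι]
    {d w : ι → ℝ} (hw : ∀ i, 0 < w i) {a b : ι} (hab : d a < d b)
    (hgap : ∀ j, j ≠ a → j ≠ b → d j < d a ∨ d b < d j) :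
    ∃ x ∈ Set.Ioo (d a) (d b), (secularPoly d w).IsRoot x := by
  have hsign : (secularPoly d w).eval (d a) * (secularPoly d w).eval (d b) < 0 := by
    rw [eval_secularPoly_self, eval_secularPoly_self]
    calc _ = w a * w b *
          ((∏ j ∈ univ.erase a, (d a - d j)) * ∏ j ∈ univ.erase b, (d b - d j)) := by ring
      _ < 0 := mul_neg_of_pos_of_neg (mul_pos (hw a) (hw b))
          (prod_erase_sub_mul_prod_erase_sub_neg hab hgap)
  have hcont := (secularPoly d w).continuous.continuousOn (s := Set.Icc (d a) (d b))
  rcases mul_neg_iff.mp hsign with ⟨ha, hb⟩ | ⟨ha, hb⟩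
  · exact intermediate_value_Ioo' hab.le hcont ⟨hb, ha⟩
  · exact intermediate_value_Ioo hab.le hcont ⟨ha, hb⟩

theorem exists_isRoot_secularPoly_between {n : ℕ} {d w : Fin n → ℝ} (hd : StrictMono d)
    (hw : ∀ i, 0 < w i) (k : Fin (n - 1)) :
    ∃ x ∈ Set.Ioo (d ⟨k, by have := k.isLt; omega⟩) (d ⟨k + 1, by have := k.isLt; omega⟩),
      (secularPoly d w).IsRoot x := by
  refine exists_isRoot_secularPoly_mem_Ioo hw (hd (Fin.mk_lt_mk.mpr k.val.lt_succ_self))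
    fun j hja hjb => ?_
  rcases lt_or_gt_of_ne hja with h | h
  · exact Or.inl (hd h)
  · refine Or.inr (hd ?_)
    rw [Fin.lt_def] at h ⊢
    exact lt_of_le_of_ne (Nat.succ_le_of_lt h) fun h' => hjb (Fin.ext h'.symm)

end Polynomial

theorem strictMono_of_interlace {α : Type*} [Preorder α] {n : ℕ} {d : Fin n → α}
    (hd : Monotone d) {μ : Fin (n - 1) → α}
    (hμ : ∀ j : Fin (n - 1), d ⟨j, by have := j.isLt; omega⟩ < μ j ∧
      μ j < d ⟨j + 1, by have := j.isLt; omega⟩) :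
    StrictMono μ := fun a b hab =>
  calc μ a < d ⟨a + 1, by have := a.isLt; omega⟩ := (hμ a).2
    _ ≤ d ⟨b, by have := b.isLt; omega⟩ := hd (Fin.mk_le_mk.mpr hab)
    _ < μ b := (hμ b).1

theorem Polynomial.Monic.eq_X_mul_prod_X_sub_C {R : Type*} [CommRing R] [IsDomain R] {m : ℕ}
    {p : R[X]} (hp : p.Monic) (hdeg : p.natDegree ≤ m + 1) (h0 : p.IsRoot 0)
    {μ : Fin m → R} (hμ : Function.Injective μ) (hμ0 : ∀ j, μ j ≠ 0)
    (hroots : ∀ j, p.IsRoot (μ j)) : p = X * ∏ j, (X - C (μ j)) := by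
  classical
  have h0μ : (0 : R) ∉ univ.image μ := by simpa using hμ0
  have hp' := hp.eq_prod_X_sub_C_of_natDegree_le_card (s := insert 0 (univ.image μ))
    (by rwa [card_insert_of_notMem h0μ, card_image_of_injective _ hμ, card_univ,
      Fintype.card_fin])
    (by simpa [or_imp, forall_and] using ⟨h0, hroots⟩)
  rwa [prod_insert h0μ, prod_image fun i _ j _ h => hμ h, C_0, sub_zero] at hp'

theorem det_smul_one_sub_fromBlocks_vecMulVec {ι : Type*} [Fintype ι] [DecidableEq ι]
    (d q : ι → ℝ) (lam : ℝ) :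
    (lam • 1 - fromBlocks (diagonal d - vecMulVec q fun _ => 1) (-vecMulVec q q)
      (-vecMulVec (fun _ => 1) fun _ => 1) (diagonal d - vecMulVec (fun _ => 1) q)).det =
      (∏ i, (lam - d i)) * (secularPoly d fun i => 2 * q i).eval lam := by
  set N := fromBlocks (diagonal d - vecMulVec q fun _ => 1) (-vecMulVec q q)
      (-vecMulVec (fun _ => 1) fun _ => 1) (diagonal d - vecMulVec (fun _ => 1) q)
  have hsplit : ∀ x : ℝ, x • 1 - N = diagonal (Sum.elim (fun i => x - d i) fun i => x - d i)
      + vecMulVec (Sum.elim q 1) (Sum.elim 1 q) := fun x => by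
    ext (i | i) (j | j) <;> by_cases hij : i = j <;>
      simp only [N, hij, Matrix.add_apply, Matrix.sub_apply, Matrix.smul_apply, Matrix.neg_apply,
        fromBlocks_apply₁₁, fromBlocks_apply₁₂, fromBlocks_apply₂₁, fromBlocks_apply₂₂, one_apply,
        diagonal_apply, vecMulVec_apply, Sum.elim_inl, Sum.elim_inr, Sum.inl.injEq, Sum.inr.injEq,
        reduceCtorEq, Pi.one_apply, if_true, if_false, smul_eq_mul] <;> ring
  have hoff (x : ℝ) (hx : ∀ i, x ≠ d i) :
      (x • 1 - N).det = (∏ i, (x - d i)) * (secularPoly d fun i => 2 * q i).eval x := by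
    have hsum : ∑ i, 2 * q i / (x - d i) =
        ∑ i, q i * 1 / (x - d i) + ∑ i, 1 * q i / (x - d i) := by
      rw [← sum_add_distrib]
      exact sum_congr rfl fun i _ => by ring
    rw [hsplit, det_diagonal_add_vecMulVec (by rintro (i | i) <;> exact sub_ne_zero.mpr (hx i)),
      eval_secularPoly_of_ne _ _ hx, Fintype.prod_sum_type, Fintype.sum_sum_type, hsum]
    simp only [Sum.elim_inl, Sum.elim_inr, Pi.one_apply]
    ring
  have hdense : Dense (Set.range d)ᶜ := (Set.finite_range d).countable.dense_compl ℝ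
  have hcont_det : Continuous fun x : ℝ => (x • 1 - N).det :=
    ((continuous_id.smul continuous_const).sub continuous_const).matrix_det
  have hcont_rhs :
      Continuous fun x : ℝ => (∏ i, (x - d i)) * (secularPoly d fun i => 2 * q i).eval x :=
    (continuous_finsetProd _ fun i _ => continuous_id.sub continuous_const).mul
      (secularPoly d _).continuous
  exact congrFun
    (hcont_det.ext_on hdense hcont_rhs fun x hx => hoff x fun i h => hx ⟨i, h.symm⟩) lam

/-- Theorem 2.5: in the critical case, `M` has `2n` real eigenvalues
`0, 1/ω₁, …, 1/ωₙ` and `μ₁, …, μ_{n-1}` satisfying the interlacing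
`0 < 1/ω₁ < μ₁ < 1/ω₂ < ⋯ < μ_{n-1} < 1/ωₙ`. -/
theorem eigenvalues_of_M_critical {n : ℕ} (hn : 0 < n) (ω c : Fin n → ℝ)
    (hω : ∀ i, 0 < ω i) (hmono : StrictAnti ω)
    (hc : ∀ i, 0 < c i) (hsum : ∑ i, c i = 1)
    (q e : Fin n → ℝ) (hq : q = fun i => c i / (2 * ω i)) (he : e = fun _ => 1)
    (Γ : Matrix (Fin n) (Fin n) ℝ) (hΓ : Γ = diagonal fun i => 1 / ω i)
    (M : Matrix (Fin n ⊕ Fin n) (Fin n ⊕ Fin n) ℝ)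
    (hM : M = fromBlocks (Γ - vecMulVec q e) (-(vecMulVec q q))
      (-(vecMulVec e e)) (Γ - vecMulVec e q)) :
    ∃ μ : Fin (n - 1) → ℝ,
      (0 : ℝ) < 1 / ω ⟨0, hn⟩ ∧
      (∀ j : Fin (n - 1),
        1 / ω ⟨j, by have := j.isLt; omega⟩ < μ j ∧
        μ j < 1 / ω ⟨j + 1, by have := j.isLt; omega⟩) ∧
      ∀ lam : ℝ,
        (lam • 1 - M).det =
          lam * (∏ i, (lam - 1 / ω i)) * ∏ j, (lam - μ j) := by
  set d : Fin n → ℝ := fun i => 1 / ω i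
  have hdpos : ∀ i, 0 < d i := fun i => one_div_pos.mpr (hω i)
  have hd : StrictMono d := fun i j hij => one_div_lt_one_div_of_lt (hω j) (hmono hij)
  have hweights : (fun i => 2 * q i) = fun i => c i * d i := by
    subst hq
    funext i
    simp only [d]
    field_simp
  have hroot0 : (secularPoly d fun i => 2 * q i).IsRoot 0 := by
    rw [IsRoot, hweights, eval_zero_secularPoly_mul, hsum, sub_self, zero_mul]
  choose μ hμ hroots using exists_isRoot_secularPoly_between hd (w := fun i => 2 * q i)
    fun i => (congrFun hweights i).symm ▸ mul_pos (hc i) (hdpos i)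
  have hfactor : secularPoly d (fun i => 2 * q i) = X * ∏ j, (X - C (μ j)) :=
    (monic_secularPoly d _).eq_X_mul_prod_X_sub_C
      (by rw [natDegree_secularPoly, Fintype.card_fin]; omega) hroot0
      (strictMono_of_interlace hd.monotone hμ).injective
      (fun j => ((hdpos _).trans (hμ j).1).ne') hroots
  refine ⟨μ, hdpos _, hμ, fun lam => ?_⟩
  subst hM hΓ he
  rw [det_smul_one_sub_fromBlocks_vecMulVec, hfactor]
  simp only [eval_mul, eval_X, eval_prod, eval_sub, eval_C]
  ring
end

section
/- In the critical case, the vector u = (u_1; u_2) with u_1 = Γ^{-1}e and u_2 = -Δ^{-1}q satisfies uᵀH = 0, where H = [[D, -C],[B, -A]]. -/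
open Matrix Finset

/-!
For a symmetric `Λ` and row vectors `x, y` with `xᵀΛ = eᵀ`, `yᵀΛ = qᵀ`, the two block rows of
`(x; -y)ᵀ [[Λ - q eᵀ, -q qᵀ], [e eᵀ, -(Λ - e qᵀ)]]` collapse to `(1 - x·q - y·e) eᵀ` and
`(1 - x·q - y·e) qᵀ`, and symmetry of `Λ` gives `y·e = x·q`. With `Λ = diag(1/ωᵢ)` one has
`x = ω` and `x·q = Σ cᵢ/2 = 1/2`, which is exactly the criticality condition.
-/

namespace Matrix

variable {ι R : Type*} [Fintype ι] [CommRing R]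

theorem vecMul_eq_mulVec_of_isSymm {Λ : Matrix ι ι R} (hΛ : Λ.IsSymm) (x : ι → R) :
    x ᵥ* Λ = Λ *ᵥ x := by
  rw [← vecMul_transpose, hΛ.eq]

theorem nonsing_inv_mulVec_vecMul_of_isSymm [DecidableEq ι] {Λ : Matrix ι ι R} (hΛ : Λ.IsSymm)
    (hdet : IsUnit Λ.det) (v : ι → R) : (Λ⁻¹ *ᵥ v) ᵥ* Λ = v := by
  rw [vecMul_eq_mulVec_of_isSymm hΛ, mulVec_mulVec, mul_nonsing_inv _ hdet, one_mulVec]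

theorem sumElim_vecMul_fromBlocks_eq_smul {Λ : Matrix ι ι R} (hΛ : Λ.IsSymm) {e q x y : ι → R}
    (hx : x ᵥ* Λ = e) (hy : y ᵥ* Λ = q) :
    Sum.elim x (-y) ᵥ*
        fromBlocks (Λ - vecMulVec q e) (-vecMulVec q q) (vecMulVec e e) (-(Λ - vecMulVec e q)) =
      (1 - 2 * (x ⬝ᵥ q)) • Sum.elim e q := by
  have hyx : y ⬝ᵥ e = x ⬝ᵥ q := by
    rw [← hx, vecMul_eq_mulVec_of_isSymm hΛ, dotProduct_mulVec, hy, dotProduct_comm]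
  rw [vecMul_fromBlocks]
  ext (i | i) <;>
    simp only [Sum.elim_inl, Sum.elim_inr, Pi.add_apply, Pi.smul_apply,
      vecMul_sub, vecMul_neg, neg_vecMul, vecMul_vecMulVec, neg_dotProduct, hx, hy, hyx,
      Pi.sub_apply, Pi.neg_apply, smul_eq_mul, Sum.elim_comp_inl, Sum.elim_comp_inr] <;>
    ring

end Matrix

theorem H_left_null_vector_general {n : ℕ} (ω c : Fin n → ℝ)
    (hω : ∀ i, 0 < ω i) (hsum : ∑ i, c i = 1)
    (q e : Fin n → ℝ) (hq : q = fun i => c i / (2 * ω i)) (he : e = fun _ => 1)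
    (Γ Δ A B C D : Matrix (Fin n) (Fin n) ℝ)
    (hΓ : Γ = diagonal fun i => 1 / ω i) (hΔ : Δ = diagonal fun i => 1 / ω i)
    (hA : A = Δ - vecMulVec e q) (hB : B = vecMulVec e e)
    (hC : C = vecMulVec q q) (hD : D = Γ - vecMulVec q e)
    (H : Matrix (Fin n ⊕ Fin n) (Fin n ⊕ Fin n) ℝ)
    (hH : H = fromBlocks D (-C) B (-A))
    (u₁ u₂ : Fin n → ℝ) (hu₁ : u₁ = Γ⁻¹.mulVec e) (hu₂ : u₂ = -(Δ⁻¹.mulVec q)) :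
    H.vecMul (Sum.elim u₁ u₂) = 0 := by
  subst hH hA hB hC hD hΓ hΔ hu₁ hu₂
  set Λ : Matrix (Fin n) (Fin n) ℝ := diagonal fun i => 1 / ω i
  have hΛ : Λ.IsSymm := diagonal_transpose _
  have hΛω : Λ * diagonal ω = 1 := by
    rw [diagonal_mul_diagonal, ← diagonal_one]
    exact congrArg diagonal (funext fun i => one_div_mul_cancel (hω i).ne')
  have hdet : IsUnit Λ.det := isUnit_det_of_right_inverse hΛω
  have hx : Λ⁻¹ *ᵥ e = ω := by
    ext i
    simp [inv_eq_right_inv hΛω, mulVec_diagonal, he]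
  have hcritical : (Λ⁻¹ *ᵥ e) ⬝ᵥ q = 1 / 2 := by
    rw [hx, hq]
    calc ∑ i, ω i * (c i / (2 * ω i)) = ∑ i, c i / 2 :=
          sum_congr rfl fun i _ => by field_simp [(hω i).ne']
      _ = 1 / 2 := by rw [← sum_div, hsum]
  rw [sumElim_vecMul_fromBlocks_eq_smul hΛ (nonsing_inv_mulVec_vecMul_of_isSymm hΛ hdet e)
      (nonsing_inv_mulVec_vecMul_of_isSymm hΛ hdet q), hcritical]
  norm_num

/-- In the critical case, `u = (Γ⁻¹ e; -Δ⁻¹ q)` is a left null vector of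
`H = [[D, -C], [B, -A]]`. -/
theorem H_left_null_vector {n : ℕ} (ω c : Fin n → ℝ)
    (hω : ∀ i, 0 < ω i) (hω1 : ∀ i, ω i < 1) (hmono : StrictAnti ω)
    (hc : ∀ i, 0 < c i) (hsum : ∑ i, c i = 1)
    (q e : Fin n → ℝ) (hq : q = fun i => c i / (2 * ω i)) (he : e = fun _ => 1)
    (Γ Δ A B C D : Matrix (Fin n) (Fin n) ℝ)
    (hΓ : Γ = diagonal fun i => 1 / ω i) (hΔ : Δ = diagonal fun i => 1 / ω i)
    (hA : A = Δ - vecMulVec e q) (hB : B = vecMulVec e e)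
    (hC : C = vecMulVec q q) (hD : D = Γ - vecMulVec q e)
    (H : Matrix (Fin n ⊕ Fin n) (Fin n ⊕ Fin n) ℝ)
    (hH : H = fromBlocks D (-C) B (-A))
    (u₁ u₂ : Fin n → ℝ) (hu₁ : u₁ = Γ⁻¹.mulVec e) (hu₂ : u₂ = -(Δ⁻¹.mulVec q)) :
    H.vecMul (Sum.elim u₁ u₂) = 0 :=
  H_left_null_vector_general ω c hω hsum q e hq he Γ Δ A B C D hΓ hΔ hA hB hC hD H hH u₁ u₂ hu₁ hu₂
end

section
/- The single-shifted matrix M̂ = [[D̂, -Ĉ],[-B̂, Â]], where D̂ = Γ + (-I + ηΓ^{-1})q eᵀ, Ĉ = (I - ηΓ^{-1})q qᵀ, B̂ = (I + ηΔ^{-1})e eᵀ, Â = Δ + (-I - ηΔ^{-1})e qᵀ, is a Z-matrix if and only if 0 < η ≤ 1/ω_1. -/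
open Matrix

/-!
Since `Γ⁻¹ = diag ω`, the off-diagonal entries of `M̂` are `(ηωᵢ - 1) qᵢ`, `-(1 - ηωᵢ) qᵢ qⱼ`,
`-(1 + ηωᵢ)` and `-(1 + ηωᵢ) qⱼ`. As `q > 0` and `η > 0`, all of them are `≤ 0` exactly when
`ηωᵢ ≤ 1` for every `i`, and since `ω₁` is the largest weight this means `η ≤ 1/ω₁`.
-/

theorem Matrix.fromBlocks_offDiag_nonpos_iff {l m α : Type*} [Zero α] [LE α]
    (A : Matrix l l α) (B : Matrix l m α) (C : Matrix m l α) (D : Matrix m m α) :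
    (∀ i j, i ≠ j → fromBlocks A B C D i j ≤ 0) ↔
      (∀ i j, i ≠ j → A i j ≤ 0) ∧ (∀ i j, B i j ≤ 0) ∧ (∀ i j, C i j ≤ 0) ∧
        (∀ i j, i ≠ j → D i j ≤ 0) := by
  simp only [Sum.forall, ne_eq, Sum.inl.injEq, Sum.inr.injEq, reduceCtorEq, not_false_eq_true,
    forall_const, forall_and, fromBlocks_apply₁₁, fromBlocks_apply₁₂, fromBlocks_apply₂₁,
    fromBlocks_apply₂₂]
  tauto

theorem Matrix.inv_diagonal_one_div {ι K : Type*} [Fintype ι] [DecidableEq ι] [Field K]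
    {d : ι → K} (hd : ∀ i, d i ≠ 0) : (diagonal fun i => 1 / d i)⁻¹ = diagonal d := by
  refine inv_eq_right_inv ?_
  rw [diagonal_mul_diagonal, ← diagonal_one]
  congr 1
  funext i
  exact one_div_mul_cancel (hd i)

theorem forall_mul_le_one_iff_le_one_div {ι : Type*} {ω : ι → ℝ} {i₀ : ι}
    (hmax : ∀ i, ω i ≤ ω i₀) (hpos : 0 < ω i₀) {η : ℝ} (hη : 0 ≤ η) :
    (∀ i, η * ω i ≤ 1) ↔ η ≤ 1 / ω i₀ := by
  rw [le_div_iff₀ hpos]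
  exact ⟨fun h => h i₀, fun h i => (mul_le_mul_of_nonneg_left (hmax i) hη).trans h⟩

section SingleShift

variable {ι : Type*} [Fintype ι] [DecidableEq ι]

/-- The matrix `M̂` of the paper, with `Γ = Δ = diag (1/ωᵢ)` and `e = 1`. -/
noncomputable def singleShiftMatrix (ω q : ι → ℝ) (η : ℝ) : Matrix (ι ⊕ ι) (ι ⊕ ι) ℝ :=
  let Γ : Matrix ι ι ℝ := diagonal fun i => 1 / ω i
  fromBlocks (Γ + (η • Γ⁻¹ - 1) * vecMulVec q 1) (-((1 - η • Γ⁻¹) * vecMulVec q q))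
    (-((1 + η • Γ⁻¹) * vecMulVec 1 1)) (Γ - (1 + η • Γ⁻¹) * vecMulVec 1 q)

theorem singleShiftMatrix_offDiag_nonpos_iff {ω q : ι → ℝ} (hω : ∀ i, 0 < ω i)
    (hq : ∀ i, 0 < q i) {η : ℝ} (hη : 0 ≤ η) :
    (∀ i j, i ≠ j → singleShiftMatrix ω q η i j ≤ 0) ↔ ∀ i, η * ω i ≤ 1 := by
  simp only [singleShiftMatrix, inv_diagonal_one_div fun i => (hω i).ne',
    fromBlocks_offDiag_nonpos_iff, ← diagonal_one, ← diagonal_smul, diagonal_sub, diagonal_add]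
  simp +contextual only [Matrix.add_apply, Matrix.sub_apply, Matrix.neg_apply, diagonal_mul,
    vecMulVec_apply, diagonal_apply, Pi.smul_apply, smul_eq_mul, Pi.one_apply, mul_one, ite_false,
    zero_add, zero_sub, neg_nonpos, ne_eq, one_mul]
  constructor
  · rintro ⟨-, hC, -, -⟩ i
    exact sub_nonneg.1 (nonneg_of_mul_nonneg_left (hC i i) (mul_pos (hq i) (hq i)))
  · intro h
    have hshift_pos : ∀ i, 0 < 1 + η * ω i := fun i =>
      add_pos_of_pos_of_nonneg one_pos (mul_nonneg hη (hω i).le)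
    refine ⟨fun i j _ => ?_, fun i j => ?_, fun i j => (hshift_pos i).le,
      fun i j _ => (mul_pos (hshift_pos i) (hq j)).le⟩
    · exact mul_nonpos_of_nonpos_of_nonneg (sub_nonpos.2 (h i)) (hq i).le
    · exact mul_nonneg (sub_nonneg.2 (h i)) (mul_pos (hq i) (hq j)).le

end SingleShift

theorem single_shift_Zmatrix_iff_general {n : ℕ} (hn : 0 < n) (ω c : Fin n → ℝ)
    (hω : ∀ i, 0 < ω i) (hmono : StrictAnti ω)
    (hc : ∀ i, 0 < c i)
    (q e : Fin n → ℝ) (hq : q = fun i => c i / (2 * ω i)) (he : e = fun _ => 1)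
    (Γ Δ : Matrix (Fin n) (Fin n) ℝ)
    (hΓ : Γ = diagonal fun i => 1 / ω i) (hΔ : Δ = diagonal fun i => 1 / ω i)
    (η : ℝ) (hη : 0 < η)
    (D' C' B' A' : Matrix (Fin n) (Fin n) ℝ)
    (hD' : D' = Γ + (η • Γ⁻¹ - 1) * vecMulVec q e)
    (hC' : C' = (1 - η • Γ⁻¹) * vecMulVec q q)
    (hB' : B' = (1 + η • Δ⁻¹) * vecMulVec e e)
    (hA' : A' = Δ - (1 + η • Δ⁻¹) * vecMulVec e q)
    (M' : Matrix (Fin n ⊕ Fin n) (Fin n ⊕ Fin n) ℝ)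
    (hM' : M' = fromBlocks D' (-C') (-B') A') :
    (∀ i j, i ≠ j → M' i j ≤ 0) ↔ (0 < η ∧ η ≤ 1 / ω ⟨0, hn⟩) := by
  have hM : M' = singleShiftMatrix ω q η := by
    subst he hΓ hΔ hD' hC' hB' hA' hM'
    rfl
  have hq_pos : ∀ i, 0 < q i := fun i => hq ▸ div_pos (hc i) (mul_pos two_pos (hω i))
  have hmax : ∀ i, ω i ≤ ω ⟨0, hn⟩ := fun i =>
    hmono.antitone (Fin.mk_le_of_le_val (Nat.zero_le _))
  rw [hM, singleShiftMatrix_offDiag_nonpos_iff hω hq_pos hη.le,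
    forall_mul_le_one_iff_le_one_div hmax (hω _) hη.le, and_iff_right hη]

/-- Theorem 3.3: the single-shifted matrix `M̂` is a Z-matrix if and only if
`0 < η ≤ 1/ω₁`. -/
theorem single_shift_Zmatrix_iff {n : ℕ} (hn : 0 < n) (ω c : Fin n → ℝ)
    (hω : ∀ i, 0 < ω i) (hω1 : ∀ i, ω i < 1) (hmono : StrictAnti ω)
    (hc : ∀ i, 0 < c i) (hsum : ∑ i, c i = 1)
    (q e : Fin n → ℝ) (hq : q = fun i => c i / (2 * ω i)) (he : e = fun _ => 1)
    (Γ Δ : Matrix (Fin n) (Fin n) ℝ)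
    (hΓ : Γ = diagonal fun i => 1 / ω i) (hΔ : Δ = diagonal fun i => 1 / ω i)
    (η : ℝ) (hη : 0 < η)
    (D' C' B' A' : Matrix (Fin n) (Fin n) ℝ)
    (hD' : D' = Γ + (η • Γ⁻¹ - 1) * vecMulVec q e)
    (hC' : C' = (1 - η • Γ⁻¹) * vecMulVec q q)
    (hB' : B' = (1 + η • Δ⁻¹) * vecMulVec e e)
    (hA' : A' = Δ - (1 + η • Δ⁻¹) * vecMulVec e q)
    (M' : Matrix (Fin n ⊕ Fin n) (Fin n ⊕ Fin n) ℝ)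
    (hM' : M' = fromBlocks D' (-C') (-B') A') :
    (∀ i j, i ≠ j → M' i j ≤ 0) ↔ (0 < η ∧ η ≤ 1 / ω ⟨0, hn⟩) :=
  single_shift_Zmatrix_iff_general hn ω c hω hmono hc q e hq he Γ Δ hΓ hΔ η hη D' C' B' A' hD' hC'
    hB' hA' M' hM'
end

section
/- The characteristic polynomial of the single-shifted matrix M̂ equals that of M; that is, shifting by η v rᵀ (with Hv = 0, rᵀv = 1, r = (e; q)) leaves the spectrum of M = JH unchanged. -/
/-!
Writing `M = J H` as the diagonal matrix `diag(Γ, Δ)` minus the rank-one term `(q; e) rᵀ`, the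
shifted matrix is `M̂ = M + w rᵀ` with `w = η J v = η (Γ⁻¹ q; -Δ⁻¹ e)`. Away from the finitely
many eigenvalues `1 / ωᵢ` of the diagonal part, `w = (M - λ) p` for `p = (diag(Γ, Δ) - λ)⁻¹ w`,
and `rᵀ p = 0` because `Γ = Δ` makes its two halves cancel. Hence
`M̂ - λ = (M - λ)(1 + p rᵀ)` with `det (1 + p rᵀ) = 1 + rᵀ p = 1`; both sides are continuous in
`λ`, so the identity extends to all `λ`.
-/

open Matrix Finset

namespace Matrix

variable {ι κ K : Type*} [Fintype ι] [DecidableEq ι] [Fintype κ] [DecidableEq κ]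

theorem det_add_vecMulVec_of_mulVec_eq [CommRing K] {X : Matrix ι ι K} {p w r : ι → K}
    (hp : X *ᵥ p = w) (hrp : r ⬝ᵥ p = 0) : (X + vecMulVec w r).det = X.det := by
  have hfactor : X + vecMulVec w r = X * (1 + vecMulVec p r) := by
    rw [Matrix.mul_add, Matrix.mul_one, mul_vecMulVec, hp]
  rw [hfactor, det_mul, vecMulVec_eq Unit, det_one_add_replicateCol_mul_replicateRow, hrp,
    add_zero, mul_one]

theorem fromBlocks_one_neg_one_mul_fromBlocks [CommRing K] (Γ Δ : Matrix κ κ K) (q e : κ → K) :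
    fromBlocks 1 0 0 (-1) *
        fromBlocks (Γ - vecMulVec q e) (-vecMulVec q q) (vecMulVec e e) (-(Δ - vecMulVec e q)) =
      fromBlocks Γ 0 0 Δ - vecMulVec (Sum.elim q e) (Sum.elim e q) := by
  rw [fromBlocks_multiply]
  ext (i | i) (j | j) <;> simp [vecMulVec_apply]

theorem det_sub_smul_one_add_vecMulVec_eq [Field K] (d g a b : κ → K) {t : K}
    (ht : ∀ i, d i ≠ t) :
    (diagonal (Sum.elim d d) - vecMulVec (Sum.elim a b) (Sum.elim b a) - t • 1 +
        vecMulVec (Sum.elim (g * a) (-(g * b))) (Sum.elim b a)).det =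
      (diagonal (Sum.elim d d) - vecMulVec (Sum.elim a b) (Sum.elim b a) - t • 1).det := by
  have hs (k : κ ⊕ κ) : Sum.elim d d k - t ≠ 0 := by
    cases k <;> exact sub_ne_zero.2 (ht _)
  set w := Sum.elim (g * a) (-(g * b))
  set p : κ ⊕ κ → K := fun k => w k / (Sum.elim d d k - t)
  have hrp : Sum.elim b a ⬝ᵥ p = 0 := by
    simp only [dotProduct, Fintype.sum_sum_type, ← sum_add_distrib]
    exact sum_eq_zero fun i _ => by
      simp only [p, w, Sum.elim_inl, Sum.elim_inr, Pi.mul_apply, Pi.neg_apply]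
      ring
  refine det_add_vecMulVec_of_mulVec_eq ?_ hrp
  ext k
  simp only [sub_mulVec, vecMulVec_mulVec, hrp, MulOpposite.op_zero, zero_smul, sub_zero,
    smul_mulVec, one_mulVec, mulVec_diagonal, Pi.sub_apply, Pi.smul_apply, smul_eq_mul, p]
  rw [← sub_mul, mul_div_cancel₀ _ (hs k)]

theorem det_sub_smul_one_eq_of_finite {A B : Matrix ι ι ℝ} {S : Set ℝ} (hS : S.Finite)
    (h : ∀ t ∉ S, (A - t • 1).det = (B - t • 1).det) (t : ℝ) :
    (A - t • 1).det = (B - t • 1).det := by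
  have hcont (X : Matrix ι ι ℝ) : Continuous fun t : ℝ => (X - t • 1).det :=
    (continuous_const.sub (continuous_id.smul continuous_const)).matrix_det
  exact congrFun (Continuous.ext_on (hS.countable.dense_compl ℝ) (hcont A) (hcont B) h) t

end Matrix

open scoped Ring

theorem single_shift_preserves_spectrum_of_M_general {n : ℕ} (ω : Fin n → ℝ)
    (q e : Fin n → ℝ)
    (Γ Δ A B C D : Matrix (Fin n) (Fin n) ℝ)
    (hΓ : Γ = diagonal fun i => 1 / ω i) (hΔ : Δ = diagonal fun i => 1 / ω i)
    (hA : A = Δ - vecMulVec e q) (hB : B = vecMulVec e e)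
    (hC : C = vecMulVec q q) (hD : D = Γ - vecMulVec q e)
    (H J Hhat M Mhat : Matrix (Fin n ⊕ Fin n) (Fin n ⊕ Fin n) ℝ)
    (hH : H = fromBlocks D (-C) B (-A))
    (hJ : J = fromBlocks 1 0 0 (-1))
    (v r : Fin n ⊕ Fin n → ℝ)
    (hv : v = Sum.elim (Γ⁻¹.mulVec q) (Δ⁻¹.mulVec e))
    (hr : r = Sum.elim e q)
    (η : ℝ)
    (hHhat : Hhat = H + η • vecMulVec v r)
    (hM : M = J * H) (hMhat : Mhat = J * Hhat) :
    ∀ lam : ℝ, (Mhat - lam • 1).det = (M - lam • 1).det := by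
  set d : Fin n → ℝ := fun i => 1 / ω i
  have hM_eq : M = diagonal (Sum.elim d d) - vecMulVec (Sum.elim q e) r := by
    rw [hM, hJ, hH, hA, hB, hC, hD, hr, fromBlocks_one_neg_one_mul_fromBlocks, hΓ, hΔ,
      fromBlocks_diagonal]
  have hJv : η • J *ᵥ v = Sum.elim ((η • d⁻¹ʳ) * q) (-((η • d⁻¹ʳ) * e)) := by
    ext (i | i) <;> simp [hJ, hv, hΓ, hΔ, inv_diagonal, fromBlocks_mulVec, mulVec_diagonal, d]
  have hshift : Mhat = M + vecMulVec (Sum.elim ((η • d⁻¹ʳ) * q) (-((η • d⁻¹ʳ) * e))) r := by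
    rw [hMhat, hHhat, hM, Matrix.mul_add, mul_smul_comm, mul_vecMulVec, ← hJv, smul_vecMulVec]
  refine det_sub_smul_one_eq_of_finite (Set.finite_range d) fun t ht => ?_
  rw [hshift, add_sub_right_comm, hM_eq, hr]
  exact det_sub_smul_one_add_vecMulVec_eq d _ q e fun i hi => ht ⟨i, hi⟩

/-- Corollary 3.2: the single shift `Ĥ = H + η v rᵀ` leaves the characteristic
polynomial of `M = J H` unchanged: `det(M̂ - λI) = det(M - λI)` for all `λ`. -/
theorem single_shift_preserves_spectrum_of_M {n : ℕ} (ω c : Fin n → ℝ)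
    (hω : ∀ i, 0 < ω i) (hω1 : ∀ i, ω i < 1) (hmono : StrictAnti ω)
    (hc : ∀ i, 0 < c i) (hsum : ∑ i, c i = 1)
    (q e : Fin n → ℝ) (hq : q = fun i => c i / (2 * ω i)) (he : e = fun _ => 1)
    (Γ Δ A B C D : Matrix (Fin n) (Fin n) ℝ)
    (hΓ : Γ = diagonal fun i => 1 / ω i) (hΔ : Δ = diagonal fun i => 1 / ω i)
    (hA : A = Δ - vecMulVec e q) (hB : B = vecMulVec e e)
    (hC : C = vecMulVec q q) (hD : D = Γ - vecMulVec q e)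
    (H J Hhat M Mhat : Matrix (Fin n ⊕ Fin n) (Fin n ⊕ Fin n) ℝ)
    (hH : H = fromBlocks D (-C) B (-A))
    (hJ : J = fromBlocks 1 0 0 (-1))
    (v r : Fin n ⊕ Fin n → ℝ)
    (hv : v = Sum.elim (Γ⁻¹.mulVec q) (Δ⁻¹.mulVec e))
    (hr : r = Sum.elim e q)
    (η : ℝ) (hη : 0 < η)
    (hHhat : Hhat = H + η • vecMulVec v r)
    (hM : M = J * H) (hMhat : Mhat = J * Hhat) :
    ∀ lam : ℝ, (Mhat - lam • 1).det = (M - lam • 1).det :=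
  single_shift_preserves_spectrum_of_M_general ω q e Γ Δ A B C D hΓ hΔ hA hB hC hD H J Hhat M Mhat
    hH hJ v r hv hr η hHhat hM hMhat
end

section
/- Let g_3(λ_k) = 4ω_1²/(ω_k ω_{k+1}) for some λ_k ∈ (1/ω_k, 1/ω_{k+1}), and suppose -1/(4ω_1²) ≤ ηξ < 0. Then g(λ_k) := λ_k g_1(λ_k) + ηξ g_2(λ_k) g_3(λ_k) > 0, where g_1, g_2, g_3 are as in Lemma 3.5. -/
/-!
Write `S = Σ cᵢ/(1/ωᵢ - λ) = g₁(λ)/λ`, `a = ω_{k+1}` and `b = ω_k`. No weight lies strictly between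
`a` and `b`, so every term of `g₂(λ) - a S = Σ cᵢ (ωᵢ - a)/(1/ωᵢ - λ)` is `≤ 0`: `ωᵢ > a` forces
`ωᵢ ≥ b`, hence `1/ωᵢ < λ`. Also `λ S = g₃(λ) - Σ cᵢ = g₃(λ) - 1 > 0` because `4ω₁² > ab`.
Therefore `ηξ g₂ g₃ ≥ ηξ a S g₃ ≥ -a S g₃/(4ω₁²) = -S/b > -λ² S`, using `λ > 1/b > 1`.
-/

open Finset

theorem mul_div_one_div_sub_eq {w c lam : ℝ} (hw : w ≠ 0) (hd : 1 / w - lam ≠ 0) :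
    lam * (c / (1 / w - lam)) = c / (w * (1 / w - lam)) - c := by
  have h : 1 - lam * w ≠ 0 := by
    rw [show 1 - lam * w = w * (1 / w - lam) by field_simp]
    exact mul_ne_zero hw hd
  field_simp
  ring

theorem mul_sum_div_one_div_sub_eq {ι : Type*} (s : Finset ι) (c w : ι → ℝ) (lam : ℝ)
    (hw : ∀ i ∈ s, w i ≠ 0) (hd : ∀ i ∈ s, 1 / w i - lam ≠ 0) :
    lam * ∑ i ∈ s, c i / (1 / w i - lam) =
      ∑ i ∈ s, c i / (w i * (1 / w i - lam)) - ∑ i ∈ s, c i := by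
  rw [mul_sum, ← sum_sub_distrib]
  exact sum_congr rfl fun i hi => mul_div_one_div_sub_eq (hw i hi) (hd i hi)

section Gap

variable {w a b lam : ℝ}

theorem one_div_sub_pos_of_le (hw : 0 < w) (h : w ≤ a) (hlam : lam < 1 / a) :
    0 < 1 / w - lam :=
  sub_pos.2 (hlam.trans_le (one_div_le_one_div_of_le hw h))

theorem one_div_sub_neg_of_le (hb : 0 < b) (h : b ≤ w) (hlam : 1 / b < lam) :
    1 / w - lam < 0 :=
  sub_neg.2 ((one_div_le_one_div_of_le hb h).trans_lt hlam)

theorem one_div_sub_ne_zero_of_gap (hw : 0 < w) (hb : 0 < b)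
    (hlam : lam ∈ Set.Ioo (1 / b) (1 / a)) (hgap : w ≤ a ∨ b ≤ w) : 1 / w - lam ≠ 0 := by
  rcases hgap with h | h
  · exact (one_div_sub_pos_of_le hw h hlam.2).ne'
  · exact (one_div_sub_neg_of_le hb h hlam.1).ne

theorem mul_div_one_div_sub_le_of_gap {c : ℝ} (hc : 0 ≤ c) (hw : 0 < w) (hb : 0 < b)
    (hlam : lam ∈ Set.Ioo (1 / b) (1 / a)) (hgap : w ≤ a ∨ b ≤ w) :
    c * w / (1 / w - lam) ≤ a * (c / (1 / w - lam)) := by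
  rw [mul_div_assoc', mul_comm a c]
  rcases hgap with h | h
  · exact div_le_div_of_nonneg_right (mul_le_mul_of_nonneg_left h hc)
      (one_div_sub_pos_of_le hw h hlam.2).le
  · have hba : 1 / b < 1 / a := hlam.1.trans hlam.2
    have ha : 0 < a := one_div_pos.1 ((one_div_pos.2 hb).trans hba)
    have hab : a < b := (one_div_lt_one_div hb ha).1 hba
    exact div_le_div_of_nonpos_of_le (one_div_sub_neg_of_le hb h hlam.1).le
      (mul_le_mul_of_nonneg_left (hab.le.trans h) hc)

theorem sum_mul_div_one_div_sub_le_of_gap {ι : Type*} (s : Finset ι) {c ω : ι → ℝ}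
    (hc : ∀ i ∈ s, 0 ≤ c i) (hω : ∀ i ∈ s, 0 < ω i) (hb : 0 < b)
    (hlam : lam ∈ Set.Ioo (1 / b) (1 / a)) (hgap : ∀ i ∈ s, ω i ≤ a ∨ b ≤ ω i) :
    ∑ i ∈ s, c i * ω i / (1 / ω i - lam) ≤ a * ∑ i ∈ s, c i / (1 / ω i - lam) := by
  rw [mul_sum]
  exact sum_le_sum fun i hi =>
    mul_div_one_div_sub_le_of_gap (hc i hi) (hω i hi) hb hlam (hgap i hi)

end Gap

theorem Antitone.le_or_le_of_fin {α : Type*} [Preorder α] {n k : ℕ} {f : Fin n → α}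
    (hf : Antitone f) (hk : k + 1 < n) (i : Fin n) :
    f i ≤ f ⟨k + 1, hk⟩ ∨ f ⟨k, Nat.lt_of_succ_lt hk⟩ ≤ f i := by
  rcases le_or_gt i.val k with h | h
  · exact Or.inr (hf h)
  · exact Or.inl (hf h)

theorem one_lt_four_mul_sq_div_mul {a b m : ℝ} (ha : 0 < a) (hab : a ≤ b) (hbm : b ≤ m) :
    1 < 4 * m ^ 2 / (b * a) := by
  have hb : 0 < b := ha.trans_le hab
  rw [one_lt_div (by positivity)]
  nlinarith

theorem sq_mul_add_mul_mul_pos {a b m lam S₁ S₂ S₃ p : ℝ} (ha : 0 < a) (hab : a ≤ b)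
    (hbm : b ≤ m) (hb1 : b < 1) (hlam : 1 / b < lam) (hid : lam * S₁ = S₃ - 1)
    (hS₂ : S₂ ≤ a * S₁) (hS₃ : S₃ = 4 * m ^ 2 / (b * a)) (hp : p ≤ 0)
    (hp' : -1 / (4 * m ^ 2) ≤ p) :
    0 < lam * (lam * S₁) + p * S₂ * S₃ := by
  have hb : 0 < b := ha.trans_le hab
  have hm : 0 < m := hb.trans_le hbm
  have hS₃1 : 1 < S₃ := hS₃ ▸ one_lt_four_mul_sq_div_mul ha hab hbm
  have hlam1 : 1 < lam := (one_lt_one_div hb hb1).trans hlam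
  have hS₁ : 0 < S₁ := pos_of_mul_pos_right (hid ▸ sub_pos.2 hS₃1) (by linarith)
  have hlam_sq : 1 / b < lam * lam := hlam.trans (lt_mul_of_one_lt_right (by linarith) hlam1)
  calc 0 < lam * (lam * S₁) - S₁ / b := by
          rw [sub_pos, div_eq_mul_one_div, mul_comm, ← mul_assoc]
          exact mul_lt_mul_of_pos_right hlam_sq hS₁
    _ = lam * (lam * S₁) + -1 / (4 * m ^ 2) * (a * S₁) * S₃ := by
          rw [hS₃]; field_simp; ring
    _ ≤ lam * (lam * S₁) + p * (a * S₁) * S₃ := by gcongr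
    _ ≤ lam * (lam * S₁) + p * S₂ * S₃ := by
          have := mul_le_mul_of_nonpos_left hS₂ hp
          gcongr

/-- Lemma 3.6 (key step): if `λₖ ∈ (1/ωₖ, 1/ω_{k+1})` satisfies
`g₃(λₖ) = 4ω₁²/(ωₖ ω_{k+1})` and `-1/(4ω₁²) ≤ η ξ < 0`, then
`g(λₖ) = λₖ g₁(λₖ) + η ξ g₂(λₖ) g₃(λₖ) > 0`. -/
theorem g_positive_at_lambda_k {n : ℕ} (hn : 0 < n) (ω c : Fin n → ℝ)
    (hω : ∀ i, 0 < ω i) (hω1 : ∀ i, ω i < 1) (hmono : StrictAnti ω)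
    (hc : ∀ i, 0 < c i) (hsum : ∑ i, c i = 1)
    (k : ℕ) (hk : k + 1 < n) (lamk : ℝ)
    (hlam : lamk ∈ Set.Ioo (1 / ω ⟨k, by omega⟩) (1 / ω ⟨k + 1, hk⟩))
    (hg3 : (∑ i, c i / (ω i * (1 / ω i - lamk))) =
      4 * ω ⟨0, hn⟩ ^ 2 / (ω ⟨k, by omega⟩ * ω ⟨k + 1, hk⟩))
    (η ξ : ℝ) (hη : 0 < η) (hξ : ξ < 0)
    (hprod : -1 / (4 * ω ⟨0, hn⟩ ^ 2) ≤ η * ξ) :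
    0 < lamk * (lamk * ∑ i, c i / (1 / ω i - lamk)) +
        η * ξ * (∑ i, c i * ω i / (1 / ω i - lamk)) *
          (∑ i, c i / (ω i * (1 / ω i - lamk))) := by
  have hgap := hmono.antitone.le_or_le_of_fin hk
  have hid : lamk * ∑ i, c i / (1 / ω i - lamk) =
      (∑ i, c i / (ω i * (1 / ω i - lamk))) - 1 := by
    rw [mul_sum_div_one_div_sub_eq univ c ω lamk (fun i _ => (hω i).ne')
      (fun i _ => one_div_sub_ne_zero_of_gap (hω i) (hω _) hlam (hgap i)), hsum]
  have hg2 := sum_mul_div_one_div_sub_le_of_gap univ (fun i _ => (hc i).le) (fun i _ => hω i)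
    (hω _) hlam (fun i _ => hgap i)
  exact sq_mul_add_mul_mul_pos (hω _) (hmono.antitone (Nat.le_succ k))
    (hmono.antitone (Nat.zero_le k)) (hω1 _) hlam.1 hid hg2 hg3
    (mul_neg_of_pos_of_neg hη hξ).le hprod
end

section
/- In the critical case, if X is the minimal nonnegative solution of XCX - XD - AX + B = 0 satisfying Xv_1 = v_2 and u_2ᵀX = -u_1ᵀ, then X also solves the double-shifted equation X̄C̄X̄ - X̄D̄ - ĀX̄ + B̄ = 0, i.e., R̄(X) = R(X) = 0, where R̄(Z) = ZC̄Z - ZD̄ - ĀZ + B̄. -/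
open Matrix

/-!
Each of the two rank-one shifts changes the Riccati residual by a rank-one term with
`X v₁ - v₂`, resp. `u₂ᵀ X + u₁ᵀ`, as a factor; both vanish under the hypotheses,
so the shifted residual of `X` equals the original one, which is zero.
-/

section

variable {m R : Type*} [Fintype m] [CommRing R]

def nareResidual (A B C D X : Matrix m m R) : Matrix m m R :=
  X * C * X - X * D - A * X + B

theorem nareResidual_doubleShift (A B C D X : Matrix m m R)
    (v₁ v₂ r₁ r₂ s₁ s₂ u₁ u₂ : m → R) (η ξ : R) :
    nareResidual (A - η • vecMulVec v₂ r₂ - ξ • vecMulVec s₂ u₂)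
        (B + η • vecMulVec v₂ r₁ + ξ • vecMulVec s₂ u₁)
        (C - η • vecMulVec v₁ r₂ - ξ • vecMulVec s₁ u₂)
        (D + η • vecMulVec v₁ r₁ + ξ • vecMulVec s₁ u₁) X =
      nareResidual A B C D X - η • vecMulVec (X *ᵥ v₁ - v₂) (r₂ ᵥ* X + r₁)
        + ξ • vecMulVec (X *ᵥ s₁ - s₂) (-(u₂ ᵥ* X) - u₁) := by
  simp only [nareResidual, Matrix.mul_sub, Matrix.sub_mul, Matrix.mul_add,
    Matrix.mul_smul, Matrix.smul_mul, mul_vecMulVec, vecMulVec_mul, sub_vecMulVec,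
    vecMulVec_add, vecMulVec_sub, vecMulVec_neg, smul_sub, smul_add, smul_neg]
  abel

theorem nareResidual_doubleShift_eq (A B C D X : Matrix m m R)
    (v₁ v₂ r₁ r₂ s₁ s₂ u₁ u₂ : m → R) (η ξ : R)
    (hXv : X *ᵥ v₁ = v₂) (hXu : u₂ ᵥ* X = -u₁) :
    nareResidual (A - η • vecMulVec v₂ r₂ - ξ • vecMulVec s₂ u₂)
        (B + η • vecMulVec v₂ r₁ + ξ • vecMulVec s₂ u₁)
        (C - η • vecMulVec v₁ r₂ - ξ • vecMulVec s₁ u₂)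
        (D + η • vecMulVec v₁ r₁ + ξ • vecMulVec s₁ u₁) X =
      nareResidual A B C D X := by
  rw [nareResidual_doubleShift, hXv, hXu]
  simp

end

theorem X_solves_double_shifted_NARE_general {n : ℕ}
    (A B C D : Matrix (Fin n) (Fin n) ℝ)
    (v₁ v₂ u₁ u₂ r₁ r₂ s₁ s₂ : Fin n → ℝ)
    (η ξ : ℝ)
    (Db Cb Bb Ab : Matrix (Fin n) (Fin n) ℝ)
    (hDb : Db = D + η • vecMulVec v₁ r₁ + ξ • vecMulVec s₁ u₁)
    (hCb : Cb = C - η • vecMulVec v₁ r₂ - ξ • vecMulVec s₁ u₂)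
    (hBb : Bb = B + η • vecMulVec v₂ r₁ + ξ • vecMulVec s₂ u₁)
    (hAb : Ab = A - η • vecMulVec v₂ r₂ - ξ • vecMulVec s₂ u₂)
    (X : Matrix (Fin n) (Fin n) ℝ)
    (hsol : X * C * X - X * D - A * X + B = 0)
    (hXv : X.mulVec v₁ = v₂) (hXu : X.vecMul u₂ = -u₁) :
    X * Cb * X - X * Db - Ab * X + Bb = 0 := by
  subst hDb hCb hBb hAb
  exact (nareResidual_doubleShift_eq A B C D X v₁ v₂ r₁ r₂ s₁ s₂ u₁ u₂ η ξ hXv hXu).trans hsol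

/-- Part of Theorem 3.8: in the critical case, a nonnegative solution `X` of the
NARE with `X v₁ = v₂` and `u₂ᵀ X = -u₁ᵀ` also solves the double-shifted NARE:
`R̄(X) = R(X) = 0`. -/
theorem X_solves_double_shifted_NARE {n : ℕ} (ω c : Fin n → ℝ)
    (hω : ∀ i, 0 < ω i) (hω1 : ∀ i, ω i < 1) (hmono : StrictAnti ω)
    (hc : ∀ i, 0 < c i) (hsum : ∑ i, c i = 1)
    (q e : Fin n → ℝ) (hq : q = fun i => c i / (2 * ω i)) (he : e = fun _ => 1)
    (Γ Δ A B C D : Matrix (Fin n) (Fin n) ℝ)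
    (hΓ : Γ = diagonal fun i => 1 / ω i) (hΔ : Δ = diagonal fun i => 1 / ω i)
    (hA : A = Δ - vecMulVec e q) (hB : B = vecMulVec e e)
    (hC : C = vecMulVec q q) (hD : D = Γ - vecMulVec q e)
    (v₁ v₂ u₁ u₂ r₁ r₂ s₁ s₂ : Fin n → ℝ)
    (hv₁ : v₁ = Γ⁻¹.mulVec q) (hv₂ : v₂ = Δ⁻¹.mulVec e)
    (hu₁ : u₁ = Γ⁻¹.mulVec e) (hu₂ : u₂ = -(Δ⁻¹.mulVec q))
    (hr₁ : r₁ = e) (hr₂ : r₂ = q) (hs₁ : s₁ = q) (hs₂ : s₂ = -e)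
    (η ξ : ℝ)
    (Db Cb Bb Ab : Matrix (Fin n) (Fin n) ℝ)
    (hDb : Db = D + η • vecMulVec v₁ r₁ + ξ • vecMulVec s₁ u₁)
    (hCb : Cb = C - η • vecMulVec v₁ r₂ - ξ • vecMulVec s₁ u₂)
    (hBb : Bb = B + η • vecMulVec v₂ r₁ + ξ • vecMulVec s₂ u₁)
    (hAb : Ab = A - η • vecMulVec v₂ r₂ - ξ • vecMulVec s₂ u₂)
    (X : Matrix (Fin n) (Fin n) ℝ) (hX0 : ∀ i j, 0 ≤ X i j)
    (hsol : X * C * X - X * D - A * X + B = 0)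
    (hXv : X.mulVec v₁ = v₂) (hXu : X.vecMul u₂ = -u₁) :
    X * Cb * X - X * Db - Ab * X + Bb = 0 :=
  X_solves_double_shifted_NARE_general A B C D v₁ v₂ u₁ u₂ r₁ r₂ s₁ s₂ η ξ Db Cb Bb Ab hDb hCb hBb
    hAb X hsol hXv hXu
end
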